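/- arXiv:1001.0074 — 4 statements merged into one kernel-verified Lean document; each statement's English description precedes it below -/
import Mathlib

section
/- Let m, n ≥ 0 and let λ be a partition. There exists a hook tableau of shape λ in the alphabet 1̄ < ⋯ < m̄ < 1 < ⋯ < n if and only if λ_{m+1} ≤ n. -/
noncomputable section

open scoped Classical

namespace Stmt4

/-- Position of a letter in the totally ordered alphabet
`1̄ < ⋯ < m̄ < 1 < ⋯ < n` (barred letters `Sum.inl`, unbarred letters `Sum.inr`). -/
def code (m n : ℕ) : Fin m ⊕ Fin n → ℕ
  | Sum.inl a => (a : ℕ)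
  | Sum.inr b => m + (b : ℕ)

/-- A hook tableau of shape `μ`: entries weakly increase along rows and columns,
barred entries strictly increase down columns, unbarred entries strictly increase
along rows. Cells `(i, j)` have row index `i` and column index `j`. -/
def IsHookTableau (m n : ℕ) (μ : YoungDiagram)
    (f : {c // c ∈ μ.cells} → Fin m ⊕ Fin n) : Prop :=
  (∀ c c' : {c // c ∈ μ.cells},
      (c : ℕ × ℕ).1 = (c' : ℕ × ℕ).1 → (c : ℕ × ℕ).2 ≤ (c' : ℕ × ℕ).2 →
      code m n (f c) ≤ code m n (f c')) ∧
  (∀ c c' : {c // c ∈ μ.cells},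
      (c : ℕ × ℕ).2 = (c' : ℕ × ℕ).2 → (c : ℕ × ℕ).1 ≤ (c' : ℕ × ℕ).1 →
      code m n (f c) ≤ code m n (f c')) ∧
  (∀ c c' : {c // c ∈ μ.cells},
      (c : ℕ × ℕ).2 = (c' : ℕ × ℕ).2 → (c : ℕ × ℕ).1 < (c' : ℕ × ℕ).1 →
      (f c).isLeft → (f c').isLeft → code m n (f c) < code m n (f c')) ∧
  (∀ c c' : {c // c ∈ μ.cells},
      (c : ℕ × ℕ).1 = (c' : ℕ × ℕ).1 → (c : ℕ × ℕ).2 < (c' : ℕ × ℕ).2 →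
      (f c).isRight → (f c').isRight → code m n (f c) < code m n (f c'))

/-- The (finite) set of hook tableaux of shape `μ`. -/
def hookTableaux (m n : ℕ) (μ : YoungDiagram) :
    Finset ({c // c ∈ μ.cells} → Fin m ⊕ Fin n) :=
  Finset.univ.filter (IsHookTableau m n μ)

/-- The hook Schur polynomial `hs_μ(x_1,…,x_m; y_1,…,y_n)`: the generating function
of hook tableaux of shape `μ`, with `x_a = X (Sum.inl a)` and `y_b = X (Sum.inr b)`. -/
def hookSchur (m n : ℕ) (μ : YoungDiagram) : MvPolynomial (Fin m ⊕ Fin n) ℤ :=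
  ∑ f ∈ hookTableaux m n μ, ∏ c, MvPolynomial.X (f c)

/-- Semistandardness of a filling of a (skew) set of cells by entries in `Fin N`:
rows weakly increase, columns strictly increase. -/
def IsSemistandard {N : ℕ} (cs : Finset (ℕ × ℕ)) (f : {c // c ∈ cs} → Fin N) : Prop :=
  (∀ c c' : {c // c ∈ cs},
      (c : ℕ × ℕ).1 = (c' : ℕ × ℕ).1 → (c : ℕ × ℕ).2 ≤ (c' : ℕ × ℕ).2 → f c ≤ f c') ∧
  (∀ c c' : {c // c ∈ cs},
      (c : ℕ × ℕ).2 = (c' : ℕ × ℕ).2 → (c : ℕ × ℕ).1 < (c' : ℕ × ℕ).1 → f c < f c')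

/-- Generating function of semistandard fillings of a set of cells in `N` variables. -/
def genSchur (N : ℕ) (cs : Finset (ℕ × ℕ)) : MvPolynomial (Fin N) ℤ :=
  ∑ f ∈ Finset.univ.filter (IsSemistandard (N := N) cs), ∏ c, MvPolynomial.X (f c)

/-- The Schur polynomial `s_μ(z_1,…,z_N)`. -/
def schurPoly (N : ℕ) (μ : YoungDiagram) : MvPolynomial (Fin N) ℤ :=
  genSchur N μ.cells

/-- The skew Schur polynomial `s_{θ/κ}(z_1,…,z_N)`. -/
def skewSchur (N : ℕ) (θ κ : YoungDiagram) : MvPolynomial (Fin N) ℤ :=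
  genSchur N (θ.cells \ κ.cells)

/-- The Young diagram of a partition of `d`. -/
def toYoung {d : ℕ} (p : Nat.Partition d) : YoungDiagram :=
  YoungDiagram.ofRowLens (p.parts.sort (· ≥ ·)) (List.Pairwise.sortedGE (Multiset.pairwise_sort _ _))

/-! Proof idea (rows and columns counted from 1 here). In a hook tableau the column above a
barred entry is barred and strictly increasing, so a barred entry in row `i` is at least `ī`.
A row whose first entry is unbarred is unbarred throughout and strictly increasing, so its
`j`-th entry is at least `j`. Hence if `λ_{m+1} > n`, the first entry of row `m + 1` can be
neither barred nor unbarred. Conversely, if `λ_{m+1} ≤ n`, filling row `i ≤ m` with `ī` and the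
cell `(i, j)`, `i > m`, with `j` gives a hook tableau. -/

lemma code_lt_iff_isLeft {m n : ℕ} (s : Fin m ⊕ Fin n) : code m n s < m ↔ s.isLeft := by
  cases s <;> simp [code, Fin.is_lt]

lemma code_lt_add {m n : ℕ} (s : Fin m ⊕ Fin n) : code m n s < m + n := by
  cases s <;> simp [code]; omega

lemma isRight_iff_le_code {m n : ℕ} (s : Fin m ⊕ Fin n) : s.isRight ↔ m ≤ code m n s := by
  rw [← Sum.not_isLeft, ← code_lt_iff_isLeft, not_lt]

namespace IsHookTableau

variable {m n : ℕ} {μ : YoungDiagram} {f : {c // c ∈ μ.cells} → Fin m ⊕ Fin n}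

lemma le_code_of_isLeft (hf : IsHookTableau m n μ f) :
    ∀ (i j : ℕ) (hij : (i, j) ∈ μ.cells), (f ⟨(i, j), hij⟩).isLeft →
      i ≤ code m n (f ⟨(i, j), hij⟩) := by
  intro i
  induction i with
  | zero => simp
  | succ i ih =>
    intro j hij hleft
    have hup : (i, j) ∈ μ.cells := μ.up_left_mem (Nat.le_succ i) le_rfl hij
    have hle := hf.2.1 ⟨(i, j), hup⟩ ⟨(i + 1, j), hij⟩ rfl (Nat.le_succ i)
    have hupLeft : (f ⟨(i, j), hup⟩).isLeft :=
      (code_lt_iff_isLeft _).1 <| hle.trans_lt <| (code_lt_iff_isLeft _).2 hleft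
    have hlt := hf.2.2.1 ⟨(i, j), hup⟩ ⟨(i + 1, j), hij⟩ rfl (Nat.lt_succ_self i) hupLeft hleft
    exact (ih j hup hupLeft).trans_lt hlt

lemma add_le_code_of_isRight (hf : IsHookTableau m n μ f) {i : ℕ} (hi : (i, 0) ∈ μ.cells)
    (hright : (f ⟨(i, 0), hi⟩).isRight) :
    ∀ (j : ℕ) (hij : (i, j) ∈ μ.cells), m + j ≤ code m n (f ⟨(i, j), hij⟩) := by
  intro j
  induction j with
  | zero => exact fun _ => (isRight_iff_le_code _).1 hright
  | succ j ih =>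
    intro hij
    have hleft : (i, j) ∈ μ.cells := μ.up_left_mem le_rfl (Nat.le_succ j) hij
    have hle := hf.1 ⟨(i, j), hleft⟩ ⟨(i, j + 1), hij⟩ rfl (Nat.le_succ j)
    have hm : m ≤ code m n (f ⟨(i, j), hleft⟩) := (Nat.le_add_right m j).trans (ih hleft)
    have hlt := hf.2.2.2 ⟨(i, j), hleft⟩ ⟨(i, j + 1), hij⟩ rfl (Nat.lt_succ_self j)
      ((isRight_iff_le_code _).2 hm) ((isRight_iff_le_code _).2 (hm.trans hle))
    exact Nat.succ_le_of_lt ((ih hleft).trans_lt hlt)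

lemma rowLen_le (hf : IsHookTableau m n μ f) : μ.rowLen m ≤ n := by
  by_contra! hn
  have hcorner : (m, n) ∈ μ.cells := YoungDiagram.mem_iff_lt_rowLen.2 hn
  have hfirst : (m, 0) ∈ μ.cells := μ.up_left_mem le_rfl (Nat.zero_le n) hcorner
  cases hs : (f ⟨(m, 0), hfirst⟩).isLeft
  · exact (code_lt_add _).not_ge
      (hf.add_le_code_of_isRight hfirst (Sum.isLeft_eq_false.1 hs) n hcorner)
  · exact ((code_lt_iff_isLeft _).2 hs).not_ge (hf.le_code_of_isLeft m 0 hfirst hs)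

end IsHookTableau

lemma lt_of_mem_of_rowLen_le {μ : YoungDiagram} {m n i j : ℕ} (hij : (i, j) ∈ μ.cells)
    (hi : m ≤ i) (hn : μ.rowLen m ≤ n) : j < n :=
  calc j < μ.rowLen i := YoungDiagram.mem_iff_lt_rowLen.1 hij
    _ ≤ μ.rowLen m := μ.rowLen_anti m i hi
    _ ≤ n := hn

def hookFilling (m n : ℕ) (μ : YoungDiagram) (hn : μ.rowLen m ≤ n) :
    {c // c ∈ μ.cells} → Fin m ⊕ Fin n := fun c =>
  if hi : c.1.1 < m then Sum.inl ⟨c.1.1, hi⟩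
  else Sum.inr ⟨c.1.2, lt_of_mem_of_rowLen_le c.2 (not_lt.1 hi) hn⟩

lemma code_hookFilling {m n : ℕ} {μ : YoungDiagram} (hn : μ.rowLen m ≤ n)
    (c : {c // c ∈ μ.cells}) :
    code m n (hookFilling m n μ hn c) = if c.1.1 < m then c.1.1 else m + c.1.2 := by
  unfold hookFilling
  split_ifs <;> rfl

lemma isLeft_hookFilling_iff {m n : ℕ} {μ : YoungDiagram} (hn : μ.rowLen m ≤ n)
    (c : {c // c ∈ μ.cells}) : (hookFilling m n μ hn c).isLeft ↔ c.1.1 < m := by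
  rw [← code_lt_iff_isLeft, code_hookFilling]
  split_ifs <;> omega

lemma isHookTableau_hookFilling {m n : ℕ} {μ : YoungDiagram} (hn : μ.rowLen m ≤ n) :
    IsHookTableau m n μ (hookFilling m n μ hn) := by
  simp only [IsHookTableau, ← Sum.not_isLeft, isLeft_hookFilling_iff, code_hookFilling]
  refine ⟨?_, ?_, ?_, ?_⟩ <;> intro c c' <;> split_ifs <;> omega

/-- `λ_{m+1}` is `μ.rowLen m`: rows are indexed from `0`. -/
theorem statement4 (m n : ℕ) (μ : YoungDiagram) :
    (∃ f : {c // c ∈ μ.cells} → Fin m ⊕ Fin n, IsHookTableau m n μ f) ↔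
      μ.rowLen m ≤ n :=
  ⟨fun ⟨_, hf⟩ => hf.rowLen_le, fun hn => ⟨_, isHookTableau_hookFilling hn⟩⟩

end Stmt4
end
end

section
/- Let m, n ≥ 0 and let λ be an (m|n)-hook partition, i.e. λ_{m+1} ≤ n. Set ν_j = max(λ'_j − m, 0) for 1 ≤ j ≤ n, where λ' is the conjugate partition. Let atyp(λ) be the largest r for which there exist pairs (i_1,j_1),…,(i_r,j_r) ∈ {1,…,m}×{1,…,n} with i_1,…,i_r pairwise distinct, j_1,…,j_r pairwise distinct, and λ_{i_t} + ν_{j_t} = i_t + j_t − m − 1 for every t. Then atyp(λ) equals the least i ∈ {0,1,…,min(m,n)} such that λ_{m−i} ≥ n−i, where this condition is interpreted as vacuously true when m−i = 0 (such an i always exists since i = min(m,n) works). -/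
/-!
For a row `i < m` the defining equation of an atypical pair forces `λ'_j ≤ m` (otherwise the
cell `(i, j)` lies in `λ` and the left-hand side is too large), so it pins down the column
`j = λ_i + m - 1 - i`. Since `λ_i - i` is strictly decreasing, distinct rows give distinct
columns, and the atypicality is the number of rows `i < m` whose column is `< n`. These rows
form a final segment `[m - k, m)` of `[0, m)`, and `k` is exactly the first `i` for which row
`m - 1 - i` is not in it, i.e. `λ_{m-i} ≥ n - i`.
-/

open Finset

theorem Finset.filter_range_eq_Ico_of_monotone {p : ℕ → Prop} [DecidablePred p] (hp : Monotone p)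
    (m : ℕ) : (range m).filter p = Ico (m - #((range m).filter p)) m := by
  set s := (range m).filter p
  have hsub : s ⊆ Ico (m - #s) m := by
    intro i hi
    obtain ⟨him, hpi⟩ := mem_filter.mp hi
    have hIco : Ico i m ⊆ s := fun j hj =>
      mem_filter.mpr ⟨mem_range.mpr (mem_Ico.mp hj).2, hp (mem_Ico.mp hj).1 hpi⟩
    have := card_le_card hIco
    rw [Nat.card_Ico] at this
    rw [mem_range] at him
    rw [mem_Ico]
    omega
  refine eq_of_subset_of_card_le hsub ?_
  rw [Nat.card_Ico]
  omega

namespace YoungDiagram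

variable (μ : YoungDiagram) (m n : ℕ)

theorem colLen_le_iff_rowLen_le {i j : ℕ} : μ.colLen j ≤ i ↔ μ.rowLen i ≤ j := by
  rw [← not_lt, ← not_lt, ← mem_iff_lt_colLen, ← mem_iff_lt_rowLen]

/-- The set whose greatest element is the degree of atypicality; rows and columns are indexed
from `0`, so `λ_{i+1} = μ.rowLen i` and `λ'_{j+1} = μ.colLen j`. -/
def atypicalitySet : Set ℕ :=
  {r : ℕ | ∃ (I : Fin r → Fin m) (J : Fin r → Fin n),
    Function.Injective I ∧ Function.Injective J ∧
    ∀ t : Fin r,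
      (μ.rowLen (I t) : ℤ) + ((μ.colLen (J t) - m : ℕ) : ℤ) =
        ((I t : ℕ) : ℤ) + ((J t : ℕ) : ℤ) + 1 - (m : ℤ)}

def atypicalRows : Finset ℕ := (range m).filter fun i => μ.rowLen i + m ≤ n + i

variable {μ m n}

theorem atypical_pair_iff {i j : ℕ} (hi : i < m) :
    (μ.rowLen i : ℤ) + ((μ.colLen j - m : ℕ) : ℤ) = (i : ℤ) + (j : ℤ) + 1 - (m : ℤ) ↔
      j = μ.rowLen i + (m - 1 - i) := by
  constructor
  · intro h
    rcases le_or_gt (μ.colLen j) m with hle | hgt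
    · omega
    · have : j < μ.rowLen i := mem_iff_lt_rowLen.mp (mem_iff_lt_colLen.mpr (by omega))
      omega
  · rintro rfl
    have : μ.colLen (μ.rowLen i + (m - 1 - i)) ≤ m :=
      (colLen_le_iff_rowLen_le μ).mpr ((μ.rowLen_anti i m hi.le).trans (Nat.le_add_right _ _))
    omega

theorem rowLen_add_sub_injOn :
    Set.InjOn (fun i => μ.rowLen i + (m - 1 - i)) (Set.Iio m) := by
  intro i hi i' hi' h
  simp only [Set.mem_Iio] at hi hi' h
  rcases le_total i i' with hii' | hi'i
  · have := μ.rowLen_anti i i' hii'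
    omega
  · have := μ.rowLen_anti i' i hi'i
    omega

theorem mem_atypicalRows {i : ℕ} : i ∈ μ.atypicalRows m n ↔ i < m ∧ μ.rowLen i + m ≤ n + i := by
  simp [atypicalRows]

theorem atypicalRows_eq_Ico :
    μ.atypicalRows m n = Ico (m - #(μ.atypicalRows m n)) m :=
  filter_range_eq_Ico_of_monotone
    (fun _ _ hii' h => (Nat.add_le_add_right (μ.rowLen_anti _ _ hii') m).trans
      (h.trans (Nat.add_le_add_left hii' n))) m

theorem card_atypicalRows_le_left : #(μ.atypicalRows m n) ≤ m :=
  (card_le_card (filter_subset _ _)).trans (card_range m).le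

theorem card_atypicalRows_le_right : #(μ.atypicalRows m n) ≤ n := by
  set k := #(μ.atypicalRows m n)
  have hkm : k ≤ m := card_atypicalRows_le_left
  rcases Nat.eq_zero_or_pos k with hk | hk
  · omega
  · have hmem : m - k ∈ μ.atypicalRows m n := by
      rw [atypicalRows_eq_Ico, mem_Ico]
      omega
    have := (mem_atypicalRows.mp hmem).2
    omega

theorem le_card_atypicalRows {r : ℕ} (hr : r ∈ μ.atypicalitySet m n) :
    r ≤ #(μ.atypicalRows m n) := by
  obtain ⟨I, J, hI, -, hIJ⟩ := hr
  have hrow : ∀ t, (I t : ℕ) ∈ μ.atypicalRows m n := fun t => by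
    have hJ := (atypical_pair_iff (I t).2).mp (hIJ t)
    have := (J t).2
    exact mem_atypicalRows.mpr ⟨(I t).2, by omega⟩
  simpa using card_le_card_of_injOn (s := univ) (fun t => (I t : ℕ)) (fun t _ => hrow t)
    (fun t _ t' _ h => hI (Fin.ext h))

theorem card_atypicalRows_mem_atypicalitySet :
    #(μ.atypicalRows m n) ∈ μ.atypicalitySet m n := by
  set k := #(μ.atypicalRows m n)
  have hkm : k ≤ m := card_atypicalRows_le_left
  have hrow : ∀ t : Fin k, m - k + t ∈ μ.atypicalRows m n := fun t => by
    rw [atypicalRows_eq_Ico, mem_Ico]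
    omega
  refine ⟨fun t => ⟨m - k + t, (mem_atypicalRows.mp (hrow t)).1⟩,
    fun t => ⟨μ.rowLen (m - k + t) + (m - 1 - (m - k + t)), by
      have := (mem_atypicalRows.mp (hrow t)).2; omega⟩, ?_, ?_, ?_⟩
  · intro t t' h
    ext
    simpa using h
  · intro t t' h
    have hrows := rowLen_add_sub_injOn (μ := μ) (mem_atypicalRows.mp (hrow t)).1
      (mem_atypicalRows.mp (hrow t')).1 (Fin.val_eq_of_eq h)
    ext
    omega
  · intro t
    exact (atypical_pair_iff (mem_atypicalRows.mp (hrow t)).1).mpr rfl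

theorem isGreatest_atypicalitySet :
    IsGreatest (μ.atypicalitySet m n) #(μ.atypicalRows m n) :=
  ⟨card_atypicalRows_mem_atypicalitySet, fun _ => le_card_atypicalRows⟩

theorem isLeast_card_atypicalRows :
    IsLeast {i : ℕ | i ≤ min m n ∧ (m - i = 0 ∨ n - i ≤ μ.rowLen (m - i - 1))}
      #(μ.atypicalRows m n) := by
  set k := #(μ.atypicalRows m n)
  have hkm : k ≤ m := card_atypicalRows_le_left
  have hkn : k ≤ n := card_atypicalRows_le_right
  constructor
  · refine ⟨le_min hkm hkn, ?_⟩
    rcases hkm.eq_or_lt with hk | hk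
    · left
      omega
    · right
      have hnot : m - k - 1 ∉ μ.atypicalRows m n := by
        rw [atypicalRows_eq_Ico, mem_Ico]
        omega
      rw [mem_atypicalRows] at hnot
      omega
  · rintro i ⟨hi, hrect⟩
    by_contra! hik
    have hmem : m - i - 1 ∈ μ.atypicalRows m n := by
      rw [atypicalRows_eq_Ico, mem_Ico]
      omega
    have := (mem_atypicalRows.mp hmem).2
    omega

end YoungDiagram

theorem statement8_general (m n : ℕ) (lam : YoungDiagram) :
    ∀ a : ℕ,
      IsGreatest {r : ℕ | ∃ (I : Fin r → Fin m) (J : Fin r → Fin n),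
          Function.Injective I ∧ Function.Injective J ∧
          ∀ t : Fin r,
            (lam.rowLen (I t) : ℤ) + ((lam.colLen (J t) - m : ℕ) : ℤ) =
              ((I t : ℕ) : ℤ) + ((J t : ℕ) : ℤ) + 1 - (m : ℤ)} a →
      IsLeast {i : ℕ | i ≤ min m n ∧ (m - i = 0 ∨ n - i ≤ lam.rowLen (m - i - 1))} a := by
  intro a ha
  obtain rfl : a = #(lam.atypicalRows m n) :=
    ha.unique YoungDiagram.isGreatest_atypicalitySet
  exact YoungDiagram.isLeast_card_atypicalRows

/-- For an `(m|n)`-hook partition `λ` (given as a Young diagram, rows and columns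
indexed from `0`, so that `λ_{i+1} = rowLen i` and `λ'_{j+1} = colLen j`), the
degree of atypicality of `λ^♮` — the largest `r` admitting pairwise distinct
`i_1,…,i_r ∈ {1,…,m}` and pairwise distinct `j_1,…,j_r ∈ {1,…,n}` with
`λ_{i_t} + ν_{j_t} = i_t + j_t - m - 1` where `ν_j = max(λ'_j - m, 0)` — equals
the least `i ≤ min m n` with `λ_{m-i} ≥ n-i` (vacuously true when `m - i = 0`). -/
theorem statement8 (m n : ℕ) (lam : YoungDiagram) (hhook : lam.rowLen m ≤ n) :
    ∀ a : ℕ,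
      IsGreatest {r : ℕ | ∃ (I : Fin r → Fin m) (J : Fin r → Fin n),
          Function.Injective I ∧ Function.Injective J ∧
          ∀ t : Fin r,
            (lam.rowLen (I t) : ℤ) + ((lam.colLen (J t) - m : ℕ) : ℤ) =
              ((I t : ℕ) : ℤ) + ((J t : ℕ) : ℤ) + 1 - (m : ℤ)} a →
      IsLeast {i : ℕ | i ≤ min m n ∧ (m - i = 0 ∨ n - i ≤ lam.rowLen (m - i - 1))} a :=
  statement8_general m n lam
end

section
/- Let m, n ≥ 1 and let λ be an (m|n)-hook partition, i.e. λ_{m+1} ≤ n. Set ν_j = max(λ'_j − m, 0) for 1 ≤ j ≤ n, where λ' is the conjugate partition. Then there exists no pair (i,j) ∈ {1,…,m}×{1,…,n} with λ_i + ν_j = i + j − m − 1 if and only if λ_m ≥ n. -/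
/-!
If `λ_m < n`, the pair `(m, λ_m + 1)` is atypical: the cell `(m, λ_m + 1)` lies outside `λ`,
so column `λ_m + 1` has fewer than `m` boxes, `ν_{λ_m + 1} = 0`, and the equation holds on the
nose. Conversely, if `λ_m ≥ n`, then `λ_i + ν_j ≥ n ≥ j > i + j - m - 1` for all `i ≤ m`
and `j ≤ n`.
-/

namespace YoungDiagram

theorem colLen_rowLen_le (μ : YoungDiagram) (i : ℕ) : μ.colLen (μ.rowLen i) ≤ i := by
  by_contra! h
  exact (mem_iff_lt_rowLen.mp (mem_iff_lt_colLen.mpr h)).false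

theorem exists_atypical_of_rowLen_lt {m n : ℕ} (hm : 1 ≤ m) (μ : YoungDiagram)
    (hlt : μ.rowLen (m - 1) < n) :
    ∃ (i : Fin m) (j : Fin n),
      (μ.rowLen i : ℤ) + ((μ.colLen j - m : ℕ) : ℤ) =
        ((i : ℕ) : ℤ) + ((j : ℕ) : ℤ) + 1 - m := by
  refine ⟨⟨m - 1, by omega⟩, ⟨μ.rowLen (m - 1), hlt⟩, ?_⟩
  have hν : μ.colLen (μ.rowLen (m - 1)) - m = 0 := by
    have := μ.colLen_rowLen_le (m - 1)
    omega
  simp only [hν]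
  omega

theorem not_exists_atypical_of_le_rowLen {m n : ℕ} (μ : YoungDiagram)
    (hge : n ≤ μ.rowLen (m - 1)) :
    ¬ ∃ (i : Fin m) (j : Fin n),
      (μ.rowLen i : ℤ) + ((μ.colLen j - m : ℕ) : ℤ) =
        ((i : ℕ) : ℤ) + ((j : ℕ) : ℤ) + 1 - m := by
  rintro ⟨i, j, heq⟩
  have hrow : n ≤ μ.rowLen i := hge.trans (μ.rowLen_anti i (m - 1) (by omega))
  omega

end YoungDiagram

theorem statement9_general (m n : ℕ) (hm : 1 ≤ m) (lam : YoungDiagram) :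
    (¬ ∃ (i : Fin m) (j : Fin n),
        (lam.rowLen i : ℤ) + ((lam.colLen j - m : ℕ) : ℤ) =
          ((i : ℕ) : ℤ) + ((j : ℕ) : ℤ) + 1 - (m : ℤ)) ↔
      n ≤ lam.rowLen (m - 1) := by
  refine ⟨fun h => ?_, lam.not_exists_atypical_of_le_rowLen⟩
  by_contra! hlt
  exact h (lam.exists_atypical_of_rowLen_lt hm hlt)

/-- Typicality criterion: for an `(m|n)`-hook partition `λ` (as a Young diagram,
rows/columns indexed from `0`, `λ_{i+1} = rowLen i`, `λ'_{j+1} = colLen j`,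
`ν_j = max(λ'_j - m, 0)`), there is no pair `(i,j) ∈ {1,…,m} × {1,…,n}` with
`λ_i + ν_j = i + j - m - 1` if and only if `λ_m ≥ n`. -/
theorem statement9 (m n : ℕ) (hm : 1 ≤ m) (hn : 1 ≤ n) (lam : YoungDiagram)
    (hhook : lam.rowLen m ≤ n) :
    (¬ ∃ (i : Fin m) (j : Fin n),
        (lam.rowLen i : ℤ) + ((lam.colLen j - m : ℕ) : ℤ) =
          ((i : ℕ) : ℤ) + ((j : ℕ) : ℤ) + 1 - (m : ℤ)) ↔
      n ≤ lam.rowLen (m - 1) :=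
  statement9_general m n hm lam
end

section
/- Fix m, n ≥ 0 and let e_1,…,e_{m+n} be the standard basis of ℚ^{m+n}, with symmetric bilinear form B(e_i,e_i) = 1 for i ≤ m, B(e_i,e_i) = −1 for i > m, and B(e_i,e_j) = 0 for i ≠ j. Call a vector e_i − e_j odd if exactly one of i, j is ≤ m. Let Φ = {e_i − e_j : 1 ≤ i ≠ j ≤ m+n}. Call a subset Φ⁺ ⊆ Φ a positive system if Φ⁺ ∩ (−Φ⁺) = ∅, Φ⁺ ∪ (−Φ⁺) = Φ, and whenever α, β ∈ Φ⁺ with α+β ∈ Φ one has α+β ∈ Φ⁺; let Π be the set of indecomposable elements of Φ⁺ (the elements not expressible as a sum of two elements of Φ⁺). Suppose α ∈ Π is odd (hence isotropic: B(α,α) = 0). Then Φ(α)⁺ := (Φ⁺ \ {α}) ∪ {−α} is again a positive system, and its set of indecomposable elements equals {β ∈ Π : β ≠ α, B(β,α) = 0} ∪ {β + α : β ∈ Π, B(β,α) ≠ 0} ∪ {−α}. -/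
noncomputable section

namespace Stmt13

/-- The standard basis vector `e_i` of `ℚ^{m+n}`. -/
def e (m n : ℕ) (i : Fin (m + n)) : Fin (m + n) → ℚ := Pi.single i 1

/-- The supertrace bilinear form: `B(e_i, e_i) = 1` for `i ≤ m`, `= -1` for `i > m`,
and `B(e_i, e_j) = 0` for `i ≠ j`. -/
def B (m n : ℕ) (v w : Fin (m + n) → ℚ) : ℚ :=
  ∑ i : Fin (m + n), (if (i : ℕ) < m then 1 else -1) * v i * w i

/-- The root system `Φ = {e_i - e_j : i ≠ j}` of `gl(m|n)`. -/
def Phi (m n : ℕ) : Set (Fin (m + n) → ℚ) :=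
  {v | ∃ i j, i ≠ j ∧ v = e m n i - e m n j}

/-- `e_i - e_j` is odd when exactly one of `i, j` is `≤ m`. -/
def IsOddRoot (m n : ℕ) (v : Fin (m + n) → ℚ) : Prop :=
  ∃ i j, i ≠ j ∧ v = e m n i - e m n j ∧ ¬(((i : ℕ) < m) ↔ ((j : ℕ) < m))

/-- A positive system in `Φ`. -/
def IsPositiveSystem (m n : ℕ) (P : Set (Fin (m + n) → ℚ)) : Prop :=
  P ⊆ Phi m n ∧
  P ∩ (Neg.neg '' P) = ∅ ∧
  P ∪ (Neg.neg '' P) = Phi m n ∧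
  ∀ a ∈ P, ∀ b ∈ P, a + b ∈ Phi m n → a + b ∈ P

/-- The indecomposable elements (simple roots) of a positive system. -/
def indec (m n : ℕ) (P : Set (Fin (m + n) → ℚ)) : Set (Fin (m + n) → ℚ) :=
  {a | a ∈ P ∧ ¬ ∃ b ∈ P, ∃ c ∈ P, a = b + c}

/-!
A positive system is `{e i - e j | i ≺ j}` for a total order `≺` on the indices, and
`α = e p - e q` is simple exactly when `q` is the immediate successor of `p`; every other index
then compares with `p` and with `q` in the same way. Hence `(Φ⁺ \ {α}) ∪ {-α}` is the image of
`Φ⁺` under the transposition of the coordinates `p` and `q`, an additive automorphism preserving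
`Φ`, and such automorphisms carry positive systems to positive systems and simple roots to
simple roots. A simple root `β ≠ α` is fixed by the transposition when `B(β, α) = 0`, and is
sent to `β + α` otherwise (`β - α` cannot occur, since `β = (β - α) + α` would decompose);
oddness gives `B(α, α) = 0`, which keeps `2α` out of the second set.
-/

variable {m n : ℕ}

lemma e_apply (i x : Fin (m + n)) : e m n i x = if x = i then 1 else 0 :=
  Pi.single_apply i 1 x

lemma e_sub_e_ne_zero {i j : Fin (m + n)} (h : i ≠ j) : e m n i - e m n j ≠ 0 := by
  intro h0
  simpa [e_apply, h] using congrFun h0 i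

lemma e_sub_e_mem_Phi {i j : Fin (m + n)} (h : i ≠ j) : e m n i - e m n j ∈ Phi m n :=
  ⟨i, j, h, rfl⟩

lemma zero_notMem_Phi : (0 : Fin (m + n) → ℚ) ∉ Phi m n := by
  rintro ⟨i, j, h, h0⟩
  exact e_sub_e_ne_zero h h0.symm

lemma B_e_sub_e_right (v : Fin (m + n) → ℚ) (p q : Fin (m + n)) :
    B m n v (e m n p - e m n q) =
      (if (p : ℕ) < m then 1 else -1) * v p - (if (q : ℕ) < m then 1 else -1) * v q := by
  simp [B, e_apply, mul_sub, Finset.sum_sub_distrib]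

def permCoords (σ : Equiv.Perm (Fin (m + n))) :
    (Fin (m + n) → ℚ) ≃+ (Fin (m + n) → ℚ) where
  toFun v := v ∘ σ
  invFun v := v ∘ σ.symm
  left_inv v := by ext; simp
  right_inv v := by ext; simp
  map_add' _ _ := rfl

lemma permCoords_e (σ : Equiv.Perm (Fin (m + n))) (i : Fin (m + n)) :
    permCoords σ (e m n i) = e m n (σ.symm i) := by
  ext x
  simp [permCoords, e_apply, Equiv.eq_symm_apply]

lemma permCoords_image_Phi (σ : Equiv.Perm (Fin (m + n))) : permCoords σ '' Phi m n = Phi m n := by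
  ext v
  constructor
  · rintro ⟨_, ⟨i, j, hij, rfl⟩, rfl⟩
    rw [map_sub, permCoords_e, permCoords_e]
    exact e_sub_e_mem_Phi (σ.symm.injective.ne hij)
  · rintro ⟨i, j, hij, rfl⟩
    refine ⟨e m n (σ i) - e m n (σ j), e_sub_e_mem_Phi (σ.injective.ne hij), ?_⟩
    simp [permCoords_e]

lemma indec_image (f : (Fin (m + n) → ℚ) ≃+ (Fin (m + n) → ℚ)) (P : Set (Fin (m + n) → ℚ)) :
    indec m n (f '' P) = f '' indec m n P := by
  ext w
  constructor
  · rintro ⟨⟨v, hv, rfl⟩, hw⟩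
    refine ⟨v, ⟨hv, ?_⟩, rfl⟩
    rintro ⟨b, hb, c, hc, rfl⟩
    exact hw ⟨f b, ⟨b, hb, rfl⟩, f c, ⟨c, hc, rfl⟩, map_add f b c⟩
  · rintro ⟨v, ⟨hv, hv'⟩, rfl⟩
    refine ⟨⟨v, hv, rfl⟩, ?_⟩
    rintro ⟨_, ⟨b, hb, rfl⟩, _, ⟨c, hc, rfl⟩, h⟩
    exact hv' ⟨b, hb, c, hc, f.injective (h.trans (map_add f b c).symm)⟩

namespace IsPositiveSystem

variable {P : Set (Fin (m + n) → ℚ)}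

lemma image (hP : IsPositiveSystem m n P) {f : (Fin (m + n) → ℚ) ≃+ (Fin (m + n) → ℚ)}
    (hf : f '' Phi m n = Phi m n) : IsPositiveSystem m n (f '' P) := by
  obtain ⟨hsub, hdisj, hunion, hadd⟩ := hP
  have hneg : Neg.neg '' (f '' P) = f '' (Neg.neg '' P) := Set.image_comm fun v => (map_neg f v).symm
  refine ⟨?_, ?_, ?_, ?_⟩
  · exact hf ▸ Set.image_mono hsub
  · rw [hneg, ← Set.image_inter f.injective, hdisj, Set.image_empty]
  · rw [hneg, ← Set.image_union, hunion, hf]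
  · rintro _ ⟨a, ha, rfl⟩ _ ⟨b, hb, rfl⟩ hab
    rw [← map_add, ← hf, f.injective.mem_set_image] at hab
    exact ⟨a + b, hadd a ha b hb hab, map_add f a b⟩

lemma neg_notMem (hP : IsPositiveSystem m n P) {v : Fin (m + n) → ℚ} (hv : v ∈ P) : -v ∉ P :=
  fun h => (Set.eq_empty_iff_forall_notMem.mp hP.2.1) v ⟨hv, -v, h, neg_neg v⟩

lemma sub_mem_or_sub_mem (hP : IsPositiveSystem m n P) {i j : Fin (m + n)} (hij : i ≠ j) :
    e m n i - e m n j ∈ P ∨ e m n j - e m n i ∈ P := by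
  have h := e_sub_e_mem_Phi (m := m) (n := n) hij
  rw [← hP.2.2.1] at h
  rcases h with h | ⟨v, hv, hv'⟩
  · exact Or.inl h
  · rw [← neg_sub, neg_inj] at hv'
    exact Or.inr (hv' ▸ hv)

lemma ne_of_sub_mem (hP : IsPositiveSystem m n P) {i j : Fin (m + n)}
    (h : e m n i - e m n j ∈ P) : i ≠ j := by
  rintro rfl
  rw [sub_self] at h
  exact zero_notMem_Phi (hP.1 h)

lemma sub_mem_trans (hP : IsPositiveSystem m n P) {i j k : Fin (m + n)}
    (hij : e m n i - e m n j ∈ P) (hjk : e m n j - e m n k ∈ P) : e m n i - e m n k ∈ P := by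
  have hik : i ≠ k := by
    rintro rfl
    exact hP.neg_notMem hij (by rwa [neg_sub])
  have h := hP.2.2.2 _ hij _ hjk
  rw [sub_add_sub_cancel] at h
  exact h (e_sub_e_mem_Phi hik)

lemma sub_mem_of_mem_indec_left (hP : IsPositiveSystem m n P) {p q k : Fin (m + n)}
    (hα : e m n p - e m n q ∈ indec m n P) (hpk : e m n p - e m n k ∈ P) (hkq : k ≠ q) :
    e m n q - e m n k ∈ P :=
  (hP.sub_mem_or_sub_mem hkq.symm).resolve_right
    fun hkq' => hα.2 ⟨_, hpk, _, hkq', (sub_add_sub_cancel _ _ _).symm⟩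

lemma sub_mem_of_mem_indec_right (hP : IsPositiveSystem m n P) {p q k : Fin (m + n)}
    (hα : e m n p - e m n q ∈ indec m n P) (hkq : e m n k - e m n q ∈ P) (hkp : k ≠ p) :
    e m n k - e m n p ∈ P :=
  (hP.sub_mem_or_sub_mem hkp).resolve_right
    fun hpk => hα.2 ⟨_, hpk, _, hkq, (sub_add_sub_cancel _ _ _).symm⟩

end IsPositiveSystem

open Equiv

lemma permCoords_swap_e_sub_e (p q i j : Fin (m + n)) :
    permCoords (swap p q) (e m n i - e m n j) = e m n (swap p q i) - e m n (swap p q j) := by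
  rw [map_sub, permCoords_e, permCoords_e, symm_swap]

lemma permCoords_swap_e_sub_e_self (p q : Fin (m + n)) :
    permCoords (swap p q) (e m n p - e m n q) = -(e m n p - e m n q) := by
  rw [permCoords_swap_e_sub_e, swap_apply_left, swap_apply_right, neg_sub]

variable {P : Set (Fin (m + n) → ℚ)} {p q : Fin (m + n)}

lemma permCoords_swap_mem (hP : IsPositiveSystem m n P) (hα : e m n p - e m n q ∈ indec m n P)
    {v : Fin (m + n) → ℚ} (hv : v ∈ P) (hvα : v ≠ e m n p - e m n q) :
    permCoords (swap p q) v ∈ P := by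
  obtain ⟨i, j, hij, rfl⟩ := hP.1 hv
  rw [permCoords_swap_e_sub_e]
  rcases eq_or_ne i p with rfl | hip
  · have hjq : j ≠ q := by rintro rfl; exact hvα rfl
    rw [swap_apply_left, swap_apply_of_ne_of_ne hij.symm hjq]
    exact hP.sub_mem_of_mem_indec_left hα hv hjq
  rcases eq_or_ne i q with rfl | hiq
  · have hjp : j ≠ p := by rintro rfl; exact hP.neg_notMem hα.1 (by rwa [neg_sub])
    rw [swap_apply_right, swap_apply_of_ne_of_ne hjp hij.symm]
    exact hP.sub_mem_trans hα.1 hv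
  rw [swap_apply_of_ne_of_ne hip hiq]
  rcases eq_or_ne j p with rfl | hjp
  · rw [swap_apply_left]
    exact hP.sub_mem_trans hv hα.1
  rcases eq_or_ne j q with rfl | hjq
  · rw [swap_apply_right]
    exact hP.sub_mem_of_mem_indec_right hα hv hip
  rwa [swap_apply_of_ne_of_ne hjp hjq]

lemma image_permCoords_swap (hP : IsPositiveSystem m n P)
    (hα : e m n p - e m n q ∈ indec m n P) :
    permCoords (swap p q) '' P = (P \ {e m n p - e m n q}) ∪ {-(e m n p - e m n q)} := by
  have hswap := permCoords_swap_e_sub_e_self (m := m) (n := n) p q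
  have hinv : ∀ v, permCoords (swap p q) (permCoords (swap p q) v) = v := fun v => by
    ext x; simp [permCoords]
  ext w
  constructor
  · rintro ⟨v, hv, rfl⟩
    rcases eq_or_ne v (e m n p - e m n q) with rfl | hvα
    · exact Or.inr hswap
    refine Or.inl ⟨permCoords_swap_mem hP hα hv hvα, fun h => ?_⟩
    rw [Set.mem_singleton_iff, ← hinv (e m n p - e m n q), hswap,
      (permCoords (swap p q)).injective.eq_iff] at h
    exact hP.neg_notMem hα.1 (h ▸ hv)
  · rintro (⟨hw, hwα⟩ | rfl)
    · exact ⟨_, permCoords_swap_mem hP hα hw hwα, hinv w⟩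
    · exact ⟨_, hα.1, hswap⟩

lemma permCoords_swap_of_mem_indec (hP : IsPositiveSystem m n P)
    (hα : e m n p - e m n q ∈ indec m n P) {β : Fin (m + n) → ℚ} (hβ : β ∈ indec m n P)
    (hβα : β ≠ e m n p - e m n q) :
    permCoords (swap p q) β =
      if B m n β (e m n p - e m n q) = 0 then β else β + (e m n p - e m n q) := by
  have hpq := hP.ne_of_sub_mem hα.1
  obtain ⟨i, j, hij, rfl⟩ := hP.1 hβ.1
  rw [permCoords_swap_e_sub_e, B_e_sub_e_right]
  rcases eq_or_ne i p with rfl | hip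
  · have hjq : j ≠ q := by rintro rfl; exact hβα rfl
    exact absurd ⟨_, hα.1, _, hP.sub_mem_of_mem_indec_left hα hβ.1 hjq,
      (sub_add_sub_cancel _ _ _).symm⟩ hβ.2
  rcases eq_or_ne i q with rfl | hiq
  · have hjp : j ≠ p := by rintro rfl; exact hP.neg_notMem hα.1 (by rw [neg_sub]; exact hβ.1)
    rw [swap_apply_right, swap_apply_of_ne_of_ne hjp hij.symm, if_neg]
    · abel
    · simp [e_apply, hpq, hjp.symm, hij, ite_eq_iff]
  rw [swap_apply_of_ne_of_ne hip hiq]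
  rcases eq_or_ne j p with rfl | hjp
  · rw [swap_apply_left, if_neg]
    · abel
    · simp [e_apply, hpq.symm, hip.symm, hiq.symm, ite_eq_iff]
  rcases eq_or_ne j q with rfl | hjq
  · exact absurd ⟨_, hP.sub_mem_of_mem_indec_right hα hβ.1 hip, _, hα.1,
      (sub_add_sub_cancel _ _ _).symm⟩ hβ.2
  rw [swap_apply_of_ne_of_ne hjp hjq, if_pos]
  simp [e_apply, hip.symm, hiq.symm, hjp.symm, hjq.symm]

lemma B_e_sub_e_self_of_odd {p q : Fin (m + n)} (hodd : ¬(((p : ℕ) < m) ↔ ((q : ℕ) < m))) :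
    B m n (e m n p - e m n q) (e m n p - e m n q) = 0 := by
  have hpq : p ≠ q := by rintro rfl; exact hodd Iff.rfl
  rw [B_e_sub_e_right]
  have hq : (q : ℕ) < m ↔ ¬(p : ℕ) < m := by tauto
  by_cases hp : (p : ℕ) < m <;> simp [e_apply, hpq, hpq.symm, hp, hq]

lemma image_indec_permCoords_swap (hP : IsPositiveSystem m n P)
    (hα : e m n p - e m n q ∈ indec m n P) (hodd : ¬(((p : ℕ) < m) ↔ ((q : ℕ) < m))) :
    permCoords (swap p q) '' indec m n P =
      {β | β ∈ indec m n P ∧ β ≠ e m n p - e m n q ∧ B m n β (e m n p - e m n q) = 0} ∪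
        {γ | ∃ β ∈ indec m n P, B m n β (e m n p - e m n q) ≠ 0 ∧ γ = β + (e m n p - e m n q)} ∪
          {-(e m n p - e m n q)} := by
  have hαα := B_e_sub_e_self_of_odd (m := m) (n := n) hodd
  ext γ
  constructor
  · rintro ⟨β, hβ, rfl⟩
    rcases eq_or_ne β (e m n p - e m n q) with rfl | hβα
    · exact Or.inr (permCoords_swap_e_sub_e_self p q)
    left
    rw [permCoords_swap_of_mem_indec hP hα hβ hβα]
    split_ifs with hB
    · exact Or.inl ⟨hβ, hβα, hB⟩
    · exact Or.inr ⟨β, hβ, hB, rfl⟩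
  · rintro ((⟨hβ, hβα, hB⟩ | ⟨β, hβ, hB, rfl⟩) | hγ)
    · exact ⟨γ, hβ, by rw [permCoords_swap_of_mem_indec hP hα hβ hβα, if_pos hB]⟩
    · have hβα : β ≠ e m n p - e m n q := by rintro rfl; exact hB hαα
      exact ⟨β, hβ, by rw [permCoords_swap_of_mem_indec hP hα hβ hβα, if_neg hB]⟩
    · rw [Set.mem_singleton_iff] at hγ
      exact ⟨_, hα, hγ ▸ permCoords_swap_e_sub_e_self p q⟩

/-- Odd reflection: if `α` is an odd indecomposable (simple) root of the positive
system `Φ⁺`, then `Φ(α)⁺ = (Φ⁺ \ {α}) ∪ {-α}` is again a positive system, whose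
simple roots are `{β ∈ Π : β ≠ α, B(β,α) = 0} ∪ {β + α : β ∈ Π, B(β,α) ≠ 0} ∪ {-α}`. -/
theorem statement13 (m n : ℕ) (P : Set (Fin (m + n) → ℚ))
    (hP : IsPositiveSystem m n P) (α : Fin (m + n) → ℚ)
    (hα : α ∈ indec m n P) (hodd : IsOddRoot m n α) :
    IsPositiveSystem m n ((P \ {α}) ∪ {-α}) ∧
    indec m n ((P \ {α}) ∪ {-α}) =
      {β | β ∈ indec m n P ∧ β ≠ α ∧ B m n β α = 0} ∪
        {γ | ∃ β ∈ indec m n P, B m n β α ≠ 0 ∧ γ = β + α} ∪ {-α} := by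
  obtain ⟨p, q, -, rfl, hpq⟩ := hodd
  rw [← image_permCoords_swap hP hα, indec_image]
  exact ⟨hP.image (permCoords_image_Phi _), image_indec_permCoords_swap hP hα hpq⟩

end Stmt13
end
end
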